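/- arXiv:1807.08623 — 2 statements merged into one kernel-verified Lean document; each statement's English description precedes it below -/
import Mathlib

section
/- Let $\widehat T=[-1,1]^2$ and let $(\hat u,\hat v)\in C^1(\widehat T)^2$. Let $(\hat u_k,\hat v_k)=\widehat I_V^c(\hat u,\hat v)$ be the interpolant in $RT_2(\widehat T)=\Q_{3,2}\times\Q_{2,3}$ defined by the 24 conditions: matching of function values and of $\partial_x\hat u$, $\partial_y\hat v$ at the four corners, matching of the edge mean values of $\hat u$ and $\partial_x\hat u$ on the vertical edges $\hat x=\pm1$, and matching of the edge mean values of $\hat v$ and $\partial_y\hat v$ on the horizontal edges $\hat y=\pm1$. Then the mean value over the top edge of the divergence of the interpolant equals the mean value over the top edge of the divergence of $(\hat u,\hat v)$: $\int_{-1}^1 \operatorname{div}(\hat u_k,\hat v_k)(\hat x,1)\,d\hat x = \int_{-1}^1 \operatorname{div}(\hat u,\hat v)(\hat x,1)\,d\hat x$. -/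
/-! By the fundamental theorem of calculus, the top-edge integral of `∂ₓuₖ` is
`uₖ(1,1) - uₖ(-1,1)`, which the corner conditions identify with `u(1,1) - u(-1,1)`;
the top-edge integral of `∂ᵧvₖ` is itself one of the interpolation conditions. -/

open intervalIntegral

/-- Partial derivative in the first variable. -/
noncomputable def pdx (f : ℝ → ℝ → ℝ) (x y : ℝ) : ℝ := deriv (fun t => f t y) x

/-- Partial derivative in the second variable. -/
noncomputable def pdy (f : ℝ → ℝ → ℝ) (x y : ℝ) : ℝ := deriv (fun t => f x t) y

/-- `p` is a polynomial of degree at most `m` in `x` and `n` in `y`. -/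
def MemQ (m n : ℕ) (p : ℝ → ℝ → ℝ) : Prop :=
  ∃ c : ℕ → ℕ → ℝ, (∀ i j, (m < i ∨ n < j) → c i j = 0) ∧
    ∀ x y, p x y = ∑ i ∈ Finset.range (m + 1), ∑ j ∈ Finset.range (n + 1),
      c i j * x ^ i * y ^ j

theorem MemQ.contDiff {m n : ℕ} {p : ℝ → ℝ → ℝ} (h : MemQ m n p) {k : WithTop ℕ∞} :
    ContDiff ℝ k (fun q : ℝ × ℝ => p q.1 q.2) := by
  obtain ⟨c, -, hp⟩ := h
  simp_rw [hp]
  fun_prop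

section PartialDerivatives

variable {f : ℝ → ℝ → ℝ} {x y : ℝ}

theorem hasDerivAt_slice_fst {L : ℝ × ℝ →L[ℝ] ℝ}
    (h : HasFDerivAt (fun q : ℝ × ℝ => f q.1 q.2) L (x, y)) :
    HasDerivAt (fun t => f t y) (L (1, 0)) x :=
  h.comp_hasDerivAt (f := fun t => (t, y)) x ((hasDerivAt_id x).prodMk (hasDerivAt_const x y))

theorem hasDerivAt_slice_snd {L : ℝ × ℝ →L[ℝ] ℝ}
    (h : HasFDerivAt (fun q : ℝ × ℝ => f q.1 q.2) L (x, y)) :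
    HasDerivAt (fun t => f x t) (L (0, 1)) y :=
  h.comp_hasDerivAt (f := fun t => (x, t)) y ((hasDerivAt_const y x).prodMk (hasDerivAt_id y))

theorem continuous_pdx (h : ContDiff ℝ 1 (fun q : ℝ × ℝ => f q.1 q.2)) (y : ℝ) :
    Continuous fun x => pdx f x y := by
  have hpdx : ∀ x, pdx f x y = fderiv ℝ (fun q : ℝ × ℝ => f q.1 q.2) (x, y) (1, 0) :=
    fun x => (hasDerivAt_slice_fst (h.differentiable one_ne_zero _).hasFDerivAt).deriv
  simp_rw [hpdx]
  exact ((h.continuous_fderiv one_ne_zero).comp (by fun_prop)).clm_apply continuous_const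

theorem continuous_pdy (h : ContDiff ℝ 1 (fun q : ℝ × ℝ => f q.1 q.2)) (y : ℝ) :
    Continuous fun x => pdy f x y := by
  have hpdy : ∀ x, pdy f x y = fderiv ℝ (fun q : ℝ × ℝ => f q.1 q.2) (x, y) (0, 1) :=
    fun x => (hasDerivAt_slice_snd (h.differentiable one_ne_zero _).hasFDerivAt).deriv
  simp_rw [hpdy]
  exact ((h.continuous_fderiv one_ne_zero).comp (by fun_prop)).clm_apply continuous_const

theorem integral_pdx_eq_sub (h : ContDiff ℝ 1 (fun q : ℝ × ℝ => f q.1 q.2)) (a b y : ℝ) :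
    ∫ x in a..b, pdx f x y = f b y - f a y :=
  integral_deriv_eq_sub
    (fun _ _ => (hasDerivAt_slice_fst
      (h.differentiable one_ne_zero _).hasFDerivAt).differentiableAt)
    ((continuous_pdx h y).intervalIntegrable a b)

end PartialDerivatives

theorem rt2_interp_top_edge_div_mean_general
    (u v uk vk : ℝ → ℝ → ℝ)
    (hu : ContDiff ℝ 1 (fun p : ℝ × ℝ => u p.1 p.2))
    (hv : ContDiff ℝ 1 (fun p : ℝ × ℝ => v p.1 p.2))
    (huk : MemQ 3 2 uk) (hvk : MemQ 2 3 vk)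
    (hcorner_u : ∀ x ∈ ({-1, 1} : Set ℝ), ∀ y ∈ ({-1, 1} : Set ℝ), uk x y = u x y)
    (hedge_vy : ∀ y ∈ ({-1, 1} : Set ℝ),
      (∫ x in (-1 : ℝ)..1, pdy vk x y) = ∫ x in (-1 : ℝ)..1, pdy v x y) :
    (∫ x in (-1 : ℝ)..1, (pdx uk x 1 + pdy vk x 1)) =
      ∫ x in (-1 : ℝ)..1, (pdx u x 1 + pdy v x 1) := by
  have hukC : ContDiff ℝ 1 (fun p : ℝ × ℝ => uk p.1 p.2) := huk.contDiff
  have hvkC : ContDiff ℝ 1 (fun p : ℝ × ℝ => vk p.1 p.2) := hvk.contDiff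
  have hm1 : (-1 : ℝ) ∈ ({-1, 1} : Set ℝ) := by simp
  have hp1 : (1 : ℝ) ∈ ({-1, 1} : Set ℝ) := by simp
  rw [integral_add ((continuous_pdx hukC 1).intervalIntegrable _ _)
      ((continuous_pdy hvkC 1).intervalIntegrable _ _),
    integral_add ((continuous_pdx hu 1).intervalIntegrable _ _)
      ((continuous_pdy hv 1).intervalIntegrable _ _),
    integral_pdx_eq_sub hukC, integral_pdx_eq_sub hu, hedge_vy 1 hp1,
    hcorner_u 1 hp1 1 hp1, hcorner_u (-1) hm1 1 hp1]

/-- The mean value of the divergence of the `RT₂` interpolant over the top edge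
equals that of the interpolated field. -/
theorem rt2_interp_top_edge_div_mean
    (u v uk vk : ℝ → ℝ → ℝ)
    (hu : ContDiff ℝ 1 (fun p : ℝ × ℝ => u p.1 p.2))
    (hv : ContDiff ℝ 1 (fun p : ℝ × ℝ => v p.1 p.2))
    (huk : MemQ 3 2 uk) (hvk : MemQ 2 3 vk)
    (hcorner_u : ∀ x ∈ ({-1, 1} : Set ℝ), ∀ y ∈ ({-1, 1} : Set ℝ), uk x y = u x y)
    (hcorner_v : ∀ x ∈ ({-1, 1} : Set ℝ), ∀ y ∈ ({-1, 1} : Set ℝ), vk x y = v x y)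
    (hcorner_ux : ∀ x ∈ ({-1, 1} : Set ℝ), ∀ y ∈ ({-1, 1} : Set ℝ),
      pdx uk x y = pdx u x y)
    (hcorner_vy : ∀ x ∈ ({-1, 1} : Set ℝ), ∀ y ∈ ({-1, 1} : Set ℝ),
      pdy vk x y = pdy v x y)
    (hedge_u : ∀ x ∈ ({-1, 1} : Set ℝ),
      (∫ y in (-1 : ℝ)..1, uk x y) = ∫ y in (-1 : ℝ)..1, u x y)
    (hedge_ux : ∀ x ∈ ({-1, 1} : Set ℝ),
      (∫ y in (-1 : ℝ)..1, pdx uk x y) = ∫ y in (-1 : ℝ)..1, pdx u x y)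
    (hedge_v : ∀ y ∈ ({-1, 1} : Set ℝ),
      (∫ x in (-1 : ℝ)..1, vk x y) = ∫ x in (-1 : ℝ)..1, v x y)
    (hedge_vy : ∀ y ∈ ({-1, 1} : Set ℝ),
      (∫ x in (-1 : ℝ)..1, pdy vk x y) = ∫ x in (-1 : ℝ)..1, pdy v x y) :
    (∫ x in (-1 : ℝ)..1, (pdx uk x 1 + pdy vk x 1)) =
      ∫ x in (-1 : ℝ)..1, (pdx u x 1 + pdy v x 1) :=
  rt2_interp_top_edge_div_mean_general u v uk vk hu hv huk hvk hcorner_u hedge_vy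
end

section
/- Let $V$ be a real vector space with a symmetric bilinear form $a$ satisfying coercivity $a(v,v)\ge C_L\|v\|^2$ and continuity $a(u,v)\le C_U\|u\|\,\|v\|$ for a norm $\|\cdot\|$ on $V$ and constants $0<C_L\le C_U$. Suppose $e_{k+1}=e_k+(u_k-u_{k+1})$ in $V$ and Galerkin orthogonality $a(e_{k+1}, u^c_{k+1}-u^c_k)=0$ holds for elements $u^c_{k+1},u^c_k\in V$ with $u_{k+1}-u^c_{k+1}=u^\perp_{k+1}$ and $u_k-u^c_k=u^\perp_k$. Then for every $\epsilon_1>0$, with $C_*=\max\{C_L,C_U\}$: $a(e_{k+1},e_{k+1})\le(1+\epsilon_1)a(e_k,e_k)+C_*(2+\epsilon_1^{-1})\|u^\perp_{k+1}-u^\perp_k\|^2-\tfrac{C_L}{2}\|u_{k+1}-u_k\|^2$. -/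
/-- Abstract core of the quasi-orthogonality property (Proposition 3). -/
theorem quasi_orthogonality_abstract {V : Type*} [AddCommGroup V] [Module ℝ V]
    (a : V → V → ℝ) (N : V → ℝ) (CL CU : ℝ) (hCL : 0 < CL) (hCLCU : CL ≤ CU)
    (hsymm : ∀ x y, a x y = a y x)
    (haddl : ∀ x y z, a (x + y) z = a x z + a y z)
    (hsmull : ∀ (c : ℝ) (x y : V), a (c • x) y = c * a x y)
    (hcoer : ∀ v, CL * N v ^ 2 ≤ a v v)
    (hcont : ∀ x y, a x y ≤ CU * N x * N y)
    (ek ek1 uk uk1 ukc uk1c ukp uk1p : V)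
    (hrel : ek1 = ek + (uk - uk1))
    (hortho : a ek1 (uk1c - ukc) = 0)
    (hperp1 : uk1 - uk1c = uk1p) (hperp : uk - ukc = ukp)
    (ε1 : ℝ) (hε1 : 0 < ε1) :
    a ek1 ek1 ≤ (1 + ε1) * a ek ek +
      max CL CU * (2 + ε1⁻¹) * N (uk1p - ukp) ^ 2 -
      CL / 2 * N (uk1 - uk) ^ 2 := by
  obtain ⟨w, hw⟩ : ∃ w, w = uk1c - ukc := ⟨_, rfl⟩
  obtain ⟨d, hd⟩ : ∃ d, d = uk1p - ukp := ⟨_, rfl⟩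
  rw [← hw] at hortho
  rw [show N (uk1p - ukp) = N d by rw [hd]]
  have haddr : ∀ x y z, a x (y + z) = a x y + a x z := by
    intro x y z; rw [hsymm, haddl, hsymm y, hsymm z]
  have hnegl : ∀ x y, a (-x) y = - a x y := by
    intro x y; rw [← neg_one_smul ℝ x, hsmull]; ring
  have hsubl : ∀ x y z, a (x - y) z = a x z - a y z := by
    intro x y z; rw [sub_eq_add_neg, haddl, hnegl]; ring
  have hsubr : ∀ x y z, a x (y - z) = a x y - a x z := by
    intro x y z; rw [hsymm, hsubl, hsymm y, hsymm z]
  have hsmulr : ∀ (c : ℝ) (x y : V), a x (c • y) = c * a x y := by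
    intro c x y; rw [hsymm, hsmull, hsymm]
  have hpsd : ∀ v, 0 ≤ a v v := fun v =>
    le_trans (mul_nonneg hCL.le (sq_nonneg _)) (hcoer v)
  have hexp : ∀ x y, a (x + y) (x + y) = a x x + 2 * a x y + a y y := by
    intro x y; rw [haddl, haddr, haddr, hsymm y x]; ring
  have h1 : ek1 + w = ek - d := by
    rw [hrel, hw, hd, ← hperp1, ← hperp]; abel
  have h2 : uk1 - uk = w + d := by
    rw [hw, hd, ← hperp1, ← hperp]; abel
  have hA : a ek1 ek1 = a ek ek - 2 * a ek d + a d d - a w w := by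
    have h3 := hexp ek1 w
    rw [h1, hortho] at h3
    have h4 : a (ek - d) (ek - d) = a ek ek - 2 * a ek d + a d d := by
      rw [hsubl, hsubr, hsubr, hsymm d ek]; ring
    linarith
  have hB : a (uk1 - uk) (uk1 - uk) = a w w + 2 * a w d + a d d := by
    rw [h2, hexp]
  have hI2 : 2 * a w d ≤ a w w + a d d := by
    have h5 := hpsd (w - d)
    rw [hsubl, hsubr, hsubr, hsymm d w] at h5
    linarith
  have hI1 : -(2 * a ek d) ≤ ε1 * a ek ek + ε1⁻¹ * a d d := by
    have h6 := hpsd (ε1 • ek + d)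
    rw [hexp, hsmull, hsmulr, hsmull] at h6
    have key : ε1 * (ε1 * a ek ek + ε1⁻¹ * a d d + 2 * a ek d)
        = ε1 * (ε1 * a ek ek) + a d d + 2 * (ε1 * a ek d) := by
      field_simp
    nlinarith [h6, hε1, key]
  have hI3 : a d d ≤ max CL CU * N d ^ 2 := by
    have h7 := hcont d d
    have h8 : CU * N d ^ 2 ≤ max CL CU * N d ^ 2 :=
      mul_le_mul_of_nonneg_right (le_max_right CL CU) (sq_nonneg _)
    nlinarith
  have hI4 := hcoer (uk1 - uk)
  have hI5 : ε1⁻¹ * a d d ≤ ε1⁻¹ * (max CL CU * N d ^ 2) :=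
    mul_le_mul_of_nonneg_left hI3 (inv_pos.mpr hε1).le
  nlinarith [hA, hB, hI1, hI2, hI3, hI4, hI5]
end
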